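/- A finite matroid is determined by its rank and its collection of non-spanning circuits: if M and N are finite matroids on the same ground set with the same rank and the same collection of non-spanning circuits, then M = N. -/

import Mathlib

/-
A finite matroid is determined by its independent sets, and these are recovered from the rank and
the non-spanning circuits: a set `I` of the ground set is independent iff `|I| ≤ r(M)` and `I`
contains no non-spanning circuit. Indeed, a dependent `I` contains a circuit `C`; if `C` is
spanning, then `C \ {e}` is a spanning independent set, i.e. a base, for any `e ∈ C`, so
`|I| ≥ |C| = r(M) + 1`.
-/

open Set

namespace Matroid

variable {α β : Type*}

/-- A circuit of a matroid is a minimal dependent set. -/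
def Circuit (M : Matroid α) (C : Set α) : Prop :=
  M.Dep C ∧ ∀ ⦃D : Set α⦄, M.Dep D → D ⊆ C → D = C

/-- The rank of a set `X` in a matroid `M` : the maximum cardinality of an
independent subset of `X`. -/
noncomputable def rkOn (M : Matroid α) (X : Set α) : ℕ :=
  sSup {n | ∃ I, M.Indep I ∧ I ⊆ X ∧ I.ncard = n}

/-- The rank of a matroid : the rank of its ground set. -/
noncomputable def rank (M : Matroid α) : ℕ := M.rkOn M.E

/-- A hyperplane : a flat whose rank is one less than the rank of the matroid. -/
def Hyperplane (M : Matroid α) (H : Set α) : Prop :=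
  M.IsFlat H ∧ M.rkOn H + 1 = M.rank

/-- Deletion of the set `D` from the matroid `M`. -/
def delete' (M : Matroid α) (D : Set α) : Matroid α := M.restrict (M.E \ D)

/-- Contraction of the set `C` in the matroid `M`. -/
def contract' (M : Matroid α) (C : Set α) : Matroid α := ((M✶).delete' C)✶

/-- A circuit `C` of `M` is freely placed if every circuit `C'` of `M` with `C' ≠ C`
and `C' ∩ C ≠ ∅` is spanning. -/
def FreelyPlaced (M : Matroid α) (C : Set α) : Prop :=
  ∀ ⦃C' : Set α⦄, M.Circuit C' → C' ≠ C → (C' ∩ C).Nonempty → M.Spanning C'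

/-- A coloop is an element belonging to every base. -/
def Coloop (M : Matroid α) (e : α) : Prop := ∀ ⦃B : Set α⦄, M.IsBase B → e ∈ B

/-- An element `e` is free in `M` if it is not a coloop and every circuit
containing `e` is spanning. -/
def FreeElem (M : Matroid α) (e : α) : Prop :=
  e ∈ M.E ∧ ¬ M.Coloop e ∧ ∀ ⦃C : Set α⦄, M.Circuit C → e ∈ C → M.Spanning C

/-- A loop is an element `e` such that `{e}` is a circuit. -/
def IsLoop' (M : Matroid α) (e : α) : Prop := M.Circuit {e}

/-- Two non-loop elements of the ground set are parallel if they are equal or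
form a two-element circuit. -/
def Parallel (M : Matroid α) (e f : α) : Prop :=
  e ∈ M.E ∧ f ∈ M.E ∧ ¬ M.IsLoop' e ∧ ¬ M.IsLoop' f ∧ (e = f ∨ M.Circuit {e, f})

/-- Two matroids are isomorphic if there is a bijection between their ground sets
mapping independent sets to independent sets. -/
def IsIso (M : Matroid α) (N : Matroid β) : Prop :=
  ∃ e : M.E ≃ N.E, ∀ I : Set M.E,
    M.Indep (Subtype.val '' I) ↔ N.Indep (Subtype.val '' (e '' I))

variable {M : Matroid α} {B C I : Set α}

def NonspanningCircuit (M : Matroid α) (C : Set α) : Prop :=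
  M.Circuit C ∧ ¬ M.Spanning C

lemma circuit_iff_isCircuit : M.Circuit C ↔ M.IsCircuit C := by
  rw [IsCircuit, minimal_iff]
  exact and_congr_right fun _ ↦ forall₃_congr fun _ _ _ ↦ eq_comm

lemma IsBase.rank_eq_ncard [M.RankFinite] (hB : M.IsBase B) : M.rank = B.ncard := by
  refine IsGreatest.csSup_eq ⟨⟨B, hB.indep, hB.subset_ground, rfl⟩, ?_⟩
  rintro _ ⟨J, hJ, -, rfl⟩
  obtain ⟨B', hB', hJB'⟩ := hJ.exists_isBase_superset
  rw [← hB'.ncard_eq_ncard_of_isBase hB]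
  exact ncard_le_ncard hJB' hB'.finite

lemma Indep.ncard_le_rank [M.RankFinite] (hI : M.Indep I) : I.ncard ≤ M.rank := by
  obtain ⟨B, hB, hIB⟩ := hI.exists_isBase_superset
  rw [hB.rank_eq_ncard]
  exact ncard_le_ncard hIB hB.finite

lemma IsCircuit.ncard_eq_rank_add_one_of_spanning [M.RankFinite] (hC : M.IsCircuit C)
    (hCs : M.Spanning C) : C.ncard = M.rank + 1 := by
  obtain ⟨e, he⟩ := hC.nonempty
  have hbase : M.IsBase (C \ {e}) := by
    refine (hC.sdiff_singleton_indep he).isBase_of_spanning ?_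
    rw [spanning_iff_closure_eq (sdiff_subset.trans hC.subset_ground),
      hC.closure_sdiff_singleton_eq, hCs.closure_eq]
  rw [hbase.rank_eq_ncard, ncard_sdiff_singleton_add_one he hC.finite]

lemma indep_iff_ncard_le_rank_and_no_nonspanningCircuit_subset [M.Finite] :
    M.Indep I ↔ I ⊆ M.E ∧ I.ncard ≤ M.rank ∧ ∀ C ⊆ I, ¬ M.NonspanningCircuit C := by
  refine ⟨fun hI ↦ ⟨hI.subset_ground, hI.ncard_le_rank, fun C hCI hC ↦ ?_⟩, ?_⟩
  · exact hC.1.1.not_indep (hI.subset hCI)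
  rintro ⟨hIE, hIr, hI⟩
  by_contra hdep
  obtain ⟨C, hCI, hC⟩ := Dep.exists_isCircuit_subset ⟨hdep, hIE⟩
  have hCs : M.Spanning C := by
    by_contra hCs
    exact hI C hCI ⟨circuit_iff_isCircuit.2 hC, hCs⟩
  have hIC : C.ncard ≤ I.ncard := ncard_le_ncard hCI (M.set_finite I hIE)
  rw [hC.ncard_eq_rank_add_one_of_spanning hCs] at hIC
  omega

/-- A finite matroid is determined by its rank and its collection of
non-spanning circuits. -/
theorem eq_of_rank_eq_of_nonspanning_circuits_eq (M N : Matroid α) [M.Finite] [N.Finite]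
    (hE : M.E = N.E) (hr : M.rank = N.rank)
    (hC : ∀ C : Set α, (M.Circuit C ∧ ¬ M.Spanning C) ↔ (N.Circuit C ∧ ¬ N.Spanning C)) :
    M = N := by
  refine ext_indep hE fun I _ ↦ ?_
  simp only [indep_iff_ncard_le_rank_and_no_nonspanningCircuit_subset, hE, hr]
  exact and_congr_right fun _ ↦ and_congr_right fun _ ↦
    forall₂_congr fun C _ ↦ not_congr (hC C)

end Matroid
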